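/- For any quantum state ρ on a finite-dimensional Hilbert space and any unitary U, the purified distance between UρU† and ρ is at most sqrt(2‖U−𝟙‖_∞). -/

import Mathlib

open Matrix Kronecker ComplexOrder

noncomputable section

variable {n : Type*} [Fintype n] [DecidableEq n]

/-- The PSD square root, as `Matrix.PosSemidef.sqrt` was defined in Mathlib (Dec 2024);
it has since been removed. -/
def Matrix.PosSemidef.sqrt {m : Type*} [Fintype m] [DecidableEq m] {𝕜 : Type*} [RCLike 𝕜]
    {A : Matrix m m 𝕜} (hA : A.PosSemidef) : Matrix m m 𝕜 :=
  hA.1.eigenvectorUnitary.1 * diagonal ((↑) ∘ (√·) ∘ hA.1.eigenvalues) *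
    (star hA.1.eigenvectorUnitary : Matrix m m 𝕜)

open Classical in
/-- The square root of a matrix: the PSD square root if the matrix is PSD, else 0. -/
def msqrt (A : Matrix n n ℂ) : Matrix n n ℂ :=
  if h : A.PosSemidef then h.sqrt else 0

/-- The trace norm (Schatten 1-norm) of a matrix. -/
def trNorm (A : Matrix n n ℂ) : ℝ :=
  ((Matrix.posSemidef_conjTranspose_mul_self A).sqrt.trace).re

/-- The operator norm of a matrix, acting on the Euclidean space. -/
def opNorm (A : Matrix n n ℂ) : ℝ :=
  ‖(Matrix.toEuclideanCLM (𝕜 := ℂ) A : EuclideanSpace ℂ n →L[ℂ] EuclideanSpace ℂ n)‖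

/-- A (normalized) quantum state: positive semidefinite with unit trace. -/
def IsState (ρ : Matrix n n ℂ) : Prop := ρ.PosSemidef ∧ ρ.trace = 1

/-- A subnormalized quantum state: positive semidefinite with trace at most one. -/
def IsSubState (ρ : Matrix n n ℂ) : Prop := ρ.PosSemidef ∧ (ρ.trace).re ≤ 1

/-- Loewner (semidefinite) order: `A ≤ B` iff `B - A` is positive semidefinite. -/
def LoewnerLE (A B : Matrix n n ℂ) : Prop := (B - A).PosSemidef

/-- Fidelity `F(ρ,σ) = ‖√ρ√σ‖₁` (extended to positive operators). -/
def fid (ρ σ : Matrix n n ℂ) : ℝ := trNorm (msqrt ρ * msqrt σ)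

/-- Generalized fidelity for subnormalized states. -/
def gFid (ρ σ : Matrix n n ℂ) : ℝ :=
  fid ρ σ + Real.sqrt ((1 - ρ.trace.re) * (1 - σ.trace.re))

/-- (Generalized) purified distance `P(ρ,σ) = sqrt(1 - F(ρ,σ)²)`. -/
def pDist (ρ σ : Matrix n n ℂ) : ℝ := Real.sqrt (1 - (gFid ρ σ)^2)

/-- Generalized trace distance `δ(ρ,σ) = (‖ρ-σ‖₁ + |Tr(ρ-σ)|)/2` for subnormalized states. -/
def trDist (ρ σ : Matrix n n ℂ) : ℝ :=
  (trNorm (ρ - σ) + |(ρ.trace - σ.trace).re|) / 2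

variable {α β γ : Type*} [Fintype α] [DecidableEq α] [Fintype β] [DecidableEq β]
  [Fintype γ] [DecidableEq γ]

/-- Partial trace over the second tensor factor. -/
def ptrSnd (ρ : Matrix (α × β) (α × β) ℂ) : Matrix α α ℂ :=
  fun i j => ∑ k, ρ (i, k) (j, k)

/-- Partial trace over the first tensor factor. -/
def ptrFst (ρ : Matrix (α × β) (α × β) ℂ) : Matrix β β ℂ :=
  fun i j => ∑ k, ρ (k, i) (k, j)

/-- Partial trace over the middle factor of a tripartite system `(α × β) × γ`. -/
def ptrMid (ρ : Matrix ((α × β) × γ) ((α × β) × γ) ℂ) : Matrix (α × γ) (α × γ) ℂ :=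
  fun p q => ∑ m, ρ ((p.1, m), p.2) ((q.1, m), q.2)

/-- Max-relative entropy `D_max(ρ‖σ) = inf {λ : ρ ≤ 2^λ σ}`. -/
def Dmax (ρ σ : Matrix n n ℂ) : ℝ :=
  sInf {l : ℝ | LoewnerLE ρ (((2:ℝ) ^ l) • σ)}

open Classical in
/-- von Neumann entropy (base 2) of a matrix (0 if not Hermitian). -/
def vnEntropy (ρ : Matrix n n ℂ) : ℝ :=
  if h : ρ.IsHermitian then -∑ i, (h.eigenvalues i) * Real.logb 2 (h.eigenvalues i) else 0

/-!
Since `√(UρU†) = U√ρU†`, the fidelity is `F(UρU†, ρ) = ‖U√ρU†√ρ‖₁ = ‖√ρU†√ρ‖₁ ≥ |Tr(U†ρ)|`.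
Writing `z = Tr(U†ρ)`, we have `1 - Re z = Re Tr((1 - U†)ρ) ≤ ‖1 - U†‖_∞ = ‖U - 1‖_∞`, hence
`1 - F² ≤ 1 - (Re z)² ≤ 2 (1 - Re z) ≤ 2 ‖U - 1‖_∞`.
-/

open scoped InnerProductSpace MatrixOrder Matrix.Norms.L2Operator

namespace CFC

variable {A : Type*} [PartialOrder A] [Ring A] [StarRing A] [TopologicalSpace A]
  [StarOrderedRing A] [Algebra ℝ A] [ContinuousFunctionalCalculus ℝ A IsSelfAdjoint]
  [NonnegSpectrumClass ℝ A] [IsSemitopologicalRing A] [T2Space A]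

lemma sqrt_conj_of_star_mul_self_eq_one {u a : A} (hu : star u * u = 1) (ha : 0 ≤ a) :
    sqrt (u * a * star u) = u * sqrt a * star u := by
  refine sqrt_unique ?_ (star_right_conjugate_nonneg (sqrt_nonneg a) u)
  calc u * sqrt a * star u * (u * sqrt a * star u)
      = u * (sqrt a * (star u * u) * sqrt a) * star u := by noncomm_ring
    _ = u * a * star u := by rw [hu, mul_one, sqrt_mul_sqrt_self a ha]

end CFC

namespace Matrix

variable {𝕜 : Type*} [RCLike 𝕜]

lemma trace_eq_sum_inner {ι : Type*} [Fintype ι] (A : Matrix n n 𝕜)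
    (b : OrthonormalBasis ι 𝕜 (EuclideanSpace 𝕜 n)) :
    A.trace = ∑ i, ⟪b i, toEuclideanCLM (n := n) (𝕜 := 𝕜) A (b i)⟫_𝕜 := by
  calc A.trace = LinearMap.trace 𝕜 _ (toEuclideanCLM (n := n) (𝕜 := 𝕜) A : _ →ₗ[𝕜] _) :=
        (trace_toLin_eq A (PiLp.basisFun 2 𝕜 n)).symm
    _ = _ := LinearMap.trace_eq_sum_inner _ b

lemma IsHermitian.toEuclideanCLM_eigenvectorBasis {A : Matrix n n 𝕜} (hA : A.IsHermitian)
    (i : n) :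
    toEuclideanCLM (n := n) (𝕜 := 𝕜) A (hA.eigenvectorBasis i) =
      (hA.eigenvalues i : 𝕜) • hA.eigenvectorBasis i := by
  rw [← WithLp.toLp_ofLp 2 (hA.eigenvectorBasis i), toEuclideanCLM_toLp,
    hA.mulVec_eigenvectorBasis, RCLike.real_smul_eq_coe_smul (K := 𝕜), WithLp.toLp_smul]

lemma PosSemidef.norm_trace_mul_le (M : Matrix n n 𝕜) {ρ : Matrix n n 𝕜} (hρ : ρ.PosSemidef) :
    ‖(M * ρ).trace‖ ≤ ‖M‖ * RCLike.re ρ.trace := by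
  set b := hρ.1.eigenvectorBasis
  set T := toEuclideanCLM (n := n) (𝕜 := 𝕜) M
  have hterm (i : n) : ‖⟪b i, T (b i)⟫_𝕜‖ ≤ ‖M‖ := by
    calc ‖⟪b i, T (b i)⟫_𝕜‖ ≤ ‖b i‖ * ‖T (b i)‖ := norm_inner_le_norm _ _
      _ ≤ ‖b i‖ * (‖T‖ * ‖b i‖) := by gcongr; exact T.le_opNorm _
      _ = ‖M‖ := by simp [b, T, cstar_norm_def]
  calc ‖(M * ρ).trace‖
      = ‖∑ i, (hρ.1.eigenvalues i : 𝕜) * ⟪b i, T (b i)⟫_𝕜‖ := by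
        simp only [trace_eq_sum_inner _ b, map_mul, mul_apply_eq_comp, b,
          hρ.1.toEuclideanCLM_eigenvectorBasis, map_smul, inner_smul_right, T]
    _ ≤ ∑ i, hρ.1.eigenvalues i * ‖M‖ := by
        refine (norm_sum_le _ _).trans (Finset.sum_le_sum fun i _ => ?_)
        rw [norm_mul, RCLike.norm_ofReal, abs_of_nonneg (hρ.eigenvalues_nonneg i)]
        exact mul_le_mul_of_nonneg_left (hterm i) (hρ.eigenvalues_nonneg i)
    _ = ‖M‖ * RCLike.re ρ.trace := by
        simp [hρ.1.trace_eq_sum_eigenvalues, Finset.mul_sum, mul_comm]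

lemma PosSemidef.sqrt_eq_cfcSqrt {A : Matrix n n 𝕜} (hA : A.PosSemidef) :
    hA.sqrt = CFC.sqrt A := by
  rw [CFC.sqrt_eq_real_sqrt A hA.nonneg, cfcₙ_eq_cfc, hA.1.cfc_eq, IsHermitian.cfc,
    Unitary.conjStarAlgAut_apply]
  rfl

lemma PosSemidef.trace_sqrt {A : Matrix n n 𝕜} (hA : A.PosSemidef) :
    hA.sqrt.trace = ∑ i, ((√(hA.1.eigenvalues i) : ℝ) : 𝕜) := by
  rw [PosSemidef.sqrt, trace_mul_cycle, Unitary.coe_star_mul_self, one_mul, trace_diagonal]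
  rfl

lemma norm_toEuclideanCLM_eigenvectorBasis_conjTranspose_mul_self (A : Matrix n n 𝕜) (i : n) :
    ‖toEuclideanCLM (n := n) (𝕜 := 𝕜) A
        ((isHermitian_conjTranspose_mul_self A).eigenvectorBasis i)‖ =
      √((isHermitian_conjTranspose_mul_self A).eigenvalues i) := by
  set T := toEuclideanCLM (n := n) (𝕜 := 𝕜) A
  have hadj : ContinuousLinearMap.adjoint T ∘L T = toEuclideanCLM (n := n) (𝕜 := 𝕜) (Aᴴ * A) := by
    rw [map_mul, ← star_eq_conjTranspose, map_star]; rfl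
  rw [ContinuousLinearMap.apply_norm_eq_sqrt_inner_adjoint_right, hadj,
    IsHermitian.toEuclideanCLM_eigenvectorBasis, inner_smul_right, inner_self_eq_norm_sq_to_K,
    OrthonormalBasis.norm_eq_one]
  simp

end Matrix

lemma norm_trace_le_trNorm (A : Matrix n n ℂ) : ‖A.trace‖ ≤ trNorm A := by
  set H := posSemidef_conjTranspose_mul_self A
  set b := H.1.eigenvectorBasis
  set T := toEuclideanCLM (n := n) (𝕜 := ℂ) A
  calc ‖A.trace‖ = ‖∑ i, ⟪b i, T (b i)⟫_ℂ‖ := by rw [trace_eq_sum_inner A b]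
    _ ≤ ∑ i, ‖T (b i)‖ := by
        refine (norm_sum_le _ _).trans (Finset.sum_le_sum fun i _ => ?_)
        simpa using norm_inner_le_norm (𝕜 := ℂ) (b i) (T (b i))
    _ = trNorm A := by
        simp only [T, b, norm_toEuclideanCLM_eigenvectorBasis_conjTranspose_mul_self, trNorm,
          H.trace_sqrt, Complex.re_sum]
        rfl

lemma trNorm_eq_re_trace_cfcSqrt (A : Matrix n n ℂ) :
    trNorm A = (CFC.sqrt (Aᴴ * A)).trace.re := by
  rw [trNorm, PosSemidef.sqrt_eq_cfcSqrt]

lemma trNorm_mul_of_conjTranspose_mul_self_eq_one {W : Matrix n n ℂ} (hW : Wᴴ * W = 1)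
    (A : Matrix n n ℂ) : trNorm (W * A) = trNorm A := by
  rw [trNorm_eq_re_trace_cfcSqrt, trNorm_eq_re_trace_cfcSqrt, conjTranspose_mul, Matrix.mul_assoc,
    ← Matrix.mul_assoc Wᴴ, hW, Matrix.one_mul]

lemma msqrt_eq_cfcSqrt {A : Matrix n n ℂ} (hA : A.PosSemidef) : msqrt A = CFC.sqrt A := by
  rw [msqrt, dif_pos hA, hA.sqrt_eq_cfcSqrt]

lemma norm_trace_conjTranspose_mul_le_fid {ρ U : Matrix n n ℂ} (hρ : ρ.PosSemidef)
    (hU : Uᴴ * U = 1) : ‖(Uᴴ * ρ).trace‖ ≤ fid (U * ρ * Uᴴ) ρ := by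
  set S := CFC.sqrt ρ
  have hsqrt : CFC.sqrt (U * ρ * Uᴴ) = U * S * Uᴴ :=
    CFC.sqrt_conj_of_star_mul_self_eq_one hU hρ.nonneg
  have hfid : fid (U * ρ * Uᴴ) ρ = trNorm (S * Uᴴ * S) := by
    rw [fid, msqrt_eq_cfcSqrt (hρ.mul_mul_conjTranspose_same U), msqrt_eq_cfcSqrt hρ, hsqrt,
      ← trNorm_mul_of_conjTranspose_mul_self_eq_one hU (S * Uᴴ * S)]
    simp only [Matrix.mul_assoc, S]
  have htr : (S * Uᴴ * S).trace = (Uᴴ * ρ).trace := by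
    rw [trace_mul_cycle, CFC.sqrt_mul_sqrt_self ρ hρ.nonneg, trace_mul_comm]
  rw [hfid, ← htr]
  exact norm_trace_le_trNorm _

lemma IsState.one_sub_re_trace_mul_le {ρ : Matrix n n ℂ} (hρ : IsState ρ) (V : Matrix n n ℂ) :
    1 - (V * ρ).trace.re ≤ ‖1 - V‖ := by
  have h := hρ.1.norm_trace_mul_le (1 - V)
  rw [Matrix.sub_mul, Matrix.one_mul, trace_sub, hρ.2] at h
  calc 1 - (V * ρ).trace.re = (1 - (V * ρ).trace).re := by simp
    _ ≤ ‖1 - (V * ρ).trace‖ := Complex.re_le_norm _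
    _ ≤ ‖1 - V‖ := by simpa using h

lemma gFid_eq_fid_of_trace_eq_one {ρ σ : Matrix n n ℂ} (hρ : ρ.trace = 1) (hσ : σ.trace = 1) :
    gFid ρ σ = fid ρ σ := by
  simp [gFid, hρ, hσ]

theorem pDist_unitary_conj_le_general {d : ℕ}
    (ρ U : Matrix (Fin d) (Fin d) ℂ) (hρ : IsState ρ)
    (hU : Uᴴ * U = 1) :
    pDist (U * ρ * Uᴴ) ρ ≤ Real.sqrt (2 * opNorm (U - 1)) := by
  set F := fid (U * ρ * Uᴴ) ρ
  set z := (Uᴴ * ρ).trace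
  have hzF : ‖z‖ ≤ F := norm_trace_conjTranspose_mul_le_fid hρ.1 hU
  have hz : 1 - z.re ≤ opNorm (U - 1) := by
    calc 1 - z.re ≤ ‖1 - Uᴴ‖ := hρ.one_sub_re_trace_mul_le Uᴴ
      _ = ‖star (1 - U)‖ := by rw [star_sub, star_one, star_eq_conjTranspose]
      _ = opNorm (U - 1) := by rw [norm_star, norm_sub_rev]; rfl
  have hgF : gFid (U * ρ * Uᴴ) ρ = F := by
    refine gFid_eq_fid_of_trace_eq_one ?_ hρ.2
    rw [trace_mul_cycle, hU, Matrix.one_mul, hρ.2]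
  rw [pDist, hgF]
  gcongr
  have hzre : z.re ^ 2 ≤ F ^ 2 := by
    rw [← sq_abs]
    exact pow_le_pow_left₀ (abs_nonneg _) ((Complex.abs_re_le_norm z).trans hzF) 2
  -- `1 - r² = 2 (1 - r) - (1 - r)²`
  nlinarith [sq_nonneg (1 - z.re)]

/-- For any quantum state ρ and unitary U, the purified distance between
`UρU†` and `ρ` is at most `sqrt(2‖U−𝟙‖_∞)`. -/
theorem pDist_unitary_conj_le {d : ℕ}
    (ρ U : Matrix (Fin d) (Fin d) ℂ) (hρ : IsState ρ)
    (hU : Uᴴ * U = 1) (hU' : U * Uᴴ = 1) :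
    pDist (U * ρ * Uᴴ) ρ ≤ Real.sqrt (2 * opNorm (U - 1)) :=
  pDist_unitary_conj_le_general ρ U hρ hU
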